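/- arXiv:2602.09009 — 4 statements merged into one kernel-verified Lean document; each statement's English description precedes it below -/
import Mathlib

section
/- Let c₁, c₂ ≥ 0 and c₃ > 0 be constants, T > 0, and x : [0,T] → ℝ a differentiable function with x(t) > 0 for all t ∈ [0,T]. If x'(t) ≤ (c₁ + c₂√t)·e^{-c₃ t}·x(t) for all t ∈ [0,T], then x(t) ≤ x(0)·e^M for all t ∈ [0,T], where M = c₁/c₃ + (√π/2)·c₂·c₃^{-3/2}. -/
/-!
Since `x > 0`, the hypothesis reads `(log x)' ≤ g` with `g s = (c₁ + c₂ √s) e^{-c₃ s} ≥ 0`, so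
`log x(t) - log x(0) ≤ ∫₀ᵗ g ≤ ∫₀^∞ g = c₁ Γ(1) / c₃ + c₂ Γ(3/2) c₃^{-3/2}`, and `Γ(3/2) = √π / 2`.
-/

open MeasureTheory Set Real

lemma integrableOn_sqrt_mul_exp_neg_mul_Ioi {b : ℝ} (hb : 0 < b) :
    IntegrableOn (fun s : ℝ => √s * exp (-b * s)) (Ioi 0) :=
  (integrableOn_rpow_mul_exp_neg_mul_rpow (by norm_num : (-1 : ℝ) < 1 / 2) one_pos hb).congr_fun
    (fun s _ => by simp only [rpow_one, sqrt_eq_rpow]) measurableSet_Ioi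

lemma integral_exp_neg_mul_Ioi {b : ℝ} (hb : 0 < b) :
    ∫ s in Ioi (0 : ℝ), exp (-b * s) = 1 / b := by
  rw [integral_exp_mul_Ioi (neg_neg_of_pos hb), mul_zero, exp_zero, div_neg, neg_div, neg_neg]

lemma integral_sqrt_mul_exp_neg_mul_Ioi {b : ℝ} (hb : 0 < b) :
    ∫ s in Ioi (0 : ℝ), √s * exp (-b * s) = √π / 2 * b ^ (-(3 : ℝ) / 2) := by
  have hΓ : Gamma (3 / 2) = √π / 2 := by
    rw [show (3 : ℝ) / 2 = 1 / 2 + 1 by norm_num, Gamma_add_one (by norm_num), Gamma_one_half_eq]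
    ring
  have h := integral_rpow_mul_exp_neg_mul_rpow one_pos (by norm_num : (-1 : ℝ) < 1 / 2) hb
  norm_num only [rpow_one, div_one, mul_one] at h
  simp only [hΓ, ← sqrt_eq_rpow] at h
  rw [h, neg_div]
  ring

lemma integrableOn_add_mul_sqrt_mul_exp_neg_mul_Ioi (c₁ c₂ : ℝ) {c₃ : ℝ} (hc₃ : 0 < c₃) :
    IntegrableOn (fun s : ℝ => (c₁ + c₂ * √s) * exp (-c₃ * s)) (Ioi 0) := by
  simp only [add_mul, mul_assoc]
  exact ((exp_neg_integrableOn_Ioi 0 hc₃).const_mul c₁).add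
    ((integrableOn_sqrt_mul_exp_neg_mul_Ioi hc₃).const_mul c₂)

lemma integral_add_mul_sqrt_mul_exp_neg_mul_Ioi (c₁ c₂ : ℝ) {c₃ : ℝ} (hc₃ : 0 < c₃) :
    ∫ s in Ioi (0 : ℝ), (c₁ + c₂ * √s) * exp (-c₃ * s)
      = c₁ / c₃ + √π / 2 * c₂ * c₃ ^ (-(3 : ℝ) / 2) := by
  simp only [add_mul, mul_assoc]
  rw [integral_add ((exp_neg_integrableOn_Ioi 0 hc₃).const_mul c₁)
      ((integrableOn_sqrt_mul_exp_neg_mul_Ioi hc₃).const_mul c₂),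
    integral_const_mul, integral_const_mul, integral_exp_neg_mul_Ioi hc₃,
    integral_sqrt_mul_exp_neg_mul_Ioi hc₃]
  ring

lemma intervalIntegral_le_integral_Ioi {f : ℝ → ℝ} {a t : ℝ} (hf : IntegrableOn f (Ioi a))
    (hf_nonneg : ∀ s ∈ Ioi a, 0 ≤ f s) (hat : a ≤ t) :
    ∫ s in a..t, f s ≤ ∫ s in Ioi a, f s := by
  rw [intervalIntegral.integral_of_le hat]
  exact setIntegral_mono_set hf ((ae_restrict_mem measurableSet_Ioi).mono hf_nonneg)
    Ioc_subset_Ioi_self.eventuallyLE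

theorem le_mul_exp_intervalIntegral_of_deriv_le_mul {x x' g : ℝ → ℝ} {a b : ℝ}
    (hg : Continuous g) (hderiv : ∀ t ∈ Icc a b, HasDerivAt x (x' t) t)
    (hpos : ∀ t ∈ Icc a b, 0 < x t) (hineq : ∀ t ∈ Icc a b, x' t ≤ g t * x t) :
    ∀ t ∈ Icc a b, x t ≤ x a * exp (∫ s in a..t, g s) := by
  set φ : ℝ → ℝ := fun t => log (x t) - ∫ s in a..t, g s
  have hφ : ∀ t ∈ Icc a b, HasDerivAt φ (x' t / x t - g t) t := fun t ht =>
    ((hderiv t ht).log (hpos t ht).ne').sub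
      (intervalIntegral.integral_hasDerivAt_right (hg.intervalIntegrable a t)
        (hg.stronglyMeasurableAtFilter _ _) hg.continuousAt)
  have hanti : AntitoneOn φ (Icc a b) := by
    refine antitoneOn_of_hasDerivWithinAt_nonpos (convex_Icc a b)
      (fun t ht => (hφ t ht).continuousAt.continuousWithinAt)
      (fun t ht => (hφ t (interior_subset ht)).hasDerivWithinAt) (fun t ht => ?_)
    have ht := interior_subset ht
    have : x' t / x t ≤ g t := (div_le_iff₀ (hpos t ht)).mpr (hineq t ht)
    linarith
  intro t ht
  have ha : a ∈ Icc a b := ⟨le_rfl, ht.1.trans ht.2⟩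
  have hlog : log (x t) ≤ log (x a) + ∫ s in a..t, g s := by
    have := hanti ha ht ht.1
    simp only [φ, intervalIntegral.integral_same, sub_zero] at this
    linarith
  calc x t = exp (log (x t)) := (exp_log (hpos t ht)).symm
    _ ≤ exp (log (x a) + ∫ s in a..t, g s) := exp_le_exp.mpr hlog
    _ = x a * exp (∫ s in a..t, g s) := by rw [exp_add, exp_log (hpos a ha)]

theorem gronwall_type_bound_general (c₁ c₂ c₃ T : ℝ)
    (hc₁ : 0 ≤ c₁) (hc₂ : 0 ≤ c₂) (hc₃ : 0 < c₃)
    (x x' : ℝ → ℝ)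
    (hderiv : ∀ t ∈ Set.Icc (0 : ℝ) T, HasDerivAt x (x' t) t)
    (hpos : ∀ t ∈ Set.Icc (0 : ℝ) T, 0 < x t)
    (hineq : ∀ t ∈ Set.Icc (0 : ℝ) T,
      x' t ≤ (c₁ + c₂ * Real.sqrt t) * Real.exp (-c₃ * t) * x t) :
    ∀ t ∈ Set.Icc (0 : ℝ) T,
      x t ≤ x 0 * Real.exp (c₁ / c₃ + Real.sqrt Real.pi / 2 * c₂ * c₃ ^ (-(3 : ℝ) / 2)) := by
  set g : ℝ → ℝ := fun s => (c₁ + c₂ * √s) * exp (-c₃ * s)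
  have hg : Continuous g := by fun_prop
  intro t ht
  have hgt : ∫ s in (0 : ℝ)..t, g s ≤ c₁ / c₃ + √π / 2 * c₂ * c₃ ^ (-(3 : ℝ) / 2) := by
    rw [← integral_add_mul_sqrt_mul_exp_neg_mul_Ioi c₁ c₂ hc₃]
    exact intervalIntegral_le_integral_Ioi (integrableOn_add_mul_sqrt_mul_exp_neg_mul_Ioi c₁ c₂ hc₃)
      (fun s _ => by positivity) ht.1
  calc x t ≤ x 0 * exp (∫ s in (0 : ℝ)..t, g s) :=
        le_mul_exp_intervalIntegral_of_deriv_le_mul hg hderiv hpos hineq t ht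
    _ ≤ _ := by gcongr; exact (hpos 0 ⟨le_rfl, ht.1.trans ht.2⟩).le

/-- Gronwall-type bound. If `x > 0` on `[0,T]` and
`x'(t) ≤ (c₁ + c₂ √t) e^{-c₃ t} x(t)` on `[0,T]`, then `x(t) ≤ x(0) e^M`
where `M = c₁/c₃ + (√π/2) c₂ c₃^{-3/2}`. -/
theorem gronwall_type_bound (c₁ c₂ c₃ T : ℝ)
    (hc₁ : 0 ≤ c₁) (hc₂ : 0 ≤ c₂) (hc₃ : 0 < c₃) (hT : 0 < T)
    (x x' : ℝ → ℝ)
    (hderiv : ∀ t ∈ Set.Icc (0 : ℝ) T, HasDerivAt x (x' t) t)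
    (hpos : ∀ t ∈ Set.Icc (0 : ℝ) T, 0 < x t)
    (hineq : ∀ t ∈ Set.Icc (0 : ℝ) T,
      x' t ≤ (c₁ + c₂ * Real.sqrt t) * Real.exp (-c₃ * t) * x t) :
    ∀ t ∈ Set.Icc (0 : ℝ) T,
      x t ≤ x 0 * Real.exp (c₁ / c₃ + Real.sqrt Real.pi / 2 * c₂ * c₃ ^ (-(3 : ℝ) / 2)) :=
  gronwall_type_bound_general c₁ c₂ c₃ T hc₁ hc₂ hc₃ x x' hderiv hpos hineq
end

section
/- Consider the gradient flow w' = -uv·a, u' = -wv·a, v' = -wu·a with a = wuv and target σ = 0. If 0 < u(0) = v(0) ≤ w(0) ≤ 1, then for all t ≥ 0: 0 ≤ u(t) = v(t) ≤ w(t) ≤ 1. -/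
/-!
Since `d/dt (f²) = 2 f f'` equals `-2 (wuv)²` for each of `f = w, u, v`, all three squares decrease
and stay below `1`, and `w² - u²` is conserved. On that bounded region `u - v` and `u`, `w` solve
linear equations `f' = k f` with bounded coefficient (`k = w²uv`, `-(wv)²`, `-(uv)²`), so by
Grönwall `u - v` stays `0` and neither `u` nor `w` can cross `0`: at a zero the solution would
vanish from then on. Conservation of `w² - u² ≥ 0` together with `u, w ≥ 0` then gives `u ≤ w`.
-/

open Set

variable {f d k : ℝ → ℝ} {a b K : ℝ}

lemma antitoneOn_abs_of_mul_deriv_nonpos (hf : ∀ t ∈ Ici a, HasDerivAt f (d t) t)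
    (hd : ∀ t ∈ Ioi a, f t * d t ≤ 0) : AntitoneOn (fun t ↦ |f t|) (Ici a) := by
  have hsq : AntitoneOn (fun t ↦ f t ^ 2) (Ici a) := by
    refine antitoneOn_of_hasDerivWithinAt_nonpos (convex_Ici a)
      (fun t ht ↦ ((hf t ht).continuousAt.pow 2).continuousWithinAt)
      (f' := fun t ↦ 2 * (f t * d t)) (fun t ht ↦ ?_) (fun t ht ↦ ?_)
    · rw [interior_Ici] at ht
      exact ((hf t (mem_Ici.2 ht.out.le)).pow 2).hasDerivWithinAt.congr_deriv (by ring)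
    · rw [interior_Ici] at ht
      linarith [hd t ht]
  exact fun s hs t ht hst ↦ sq_le_sq.1 (hsq hs ht hst)

lemma eq_zero_of_abs_deriv_le_mul_abs (hab : a ≤ b) (hf : ∀ s ∈ Icc a b, HasDerivAt f (d s) s)
    (hd : ∀ s ∈ Ico a b, |d s| ≤ K * |f s|) (ha : f a = 0) : f b = 0 := by
  have := norm_le_gronwallBound_of_norm_deriv_right_le (δ := 0) (ε := 0)
    (fun s hs ↦ (hf s hs).continuousAt.continuousWithinAt)
    (fun s hs ↦ (hf s (Ico_subset_Icc_self hs)).hasDerivWithinAt) (by simp [ha])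
    (fun s hs ↦ by simpa using hd s hs) b (right_mem_Icc.2 hab)
  simpa [gronwallBound_ε0_δ0] using this

lemma nonneg_of_hasDerivAt_mul_self (hf : ∀ t ∈ Ici a, HasDerivAt f (k t * f t) t)
    (hk : ∀ t ∈ Ici a, |k t| ≤ K) (ha : 0 ≤ f a) : ∀ t ∈ Ici a, 0 ≤ f t := by
  intro t ht
  by_contra! hneg
  obtain ⟨t₀, ht₀, hzero⟩ := intermediate_value_Icc' (mem_Ici.1 ht)
    (fun s hs ↦ (hf s hs.1).continuousAt.continuousWithinAt) ⟨hneg.le, ha⟩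
  refine hneg.ne (eq_zero_of_abs_deriv_le_mul_abs (K := K) ht₀.2 (fun s hs ↦ hf s (ht₀.1.trans hs.1))
    (fun s hs ↦ ?_) hzero)
  rw [abs_mul]
  exact mul_le_mul_of_nonneg_right (hk s (ht₀.1.trans hs.1)) (abs_nonneg _)

lemma abs_mul_le_one {α : Type*} [Ring α] [LinearOrder α] [IsOrderedRing α] {x y : α}
    (hx : |x| ≤ 1) (hy : |y| ≤ 1) : |x * y| ≤ 1 := by
  rw [abs_mul]
  exact mul_le_one₀ hx (abs_nonneg y) hy

/-- The gradient flow of `½ (w u v)²` on `[0, ∞)`. -/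
structure IsGradientFlow (w u v : ℝ → ℝ) : Prop where
  hasDerivAt_w : ∀ t ∈ Ici 0, HasDerivAt w (-(u t * v t) * (w t * u t * v t)) t
  hasDerivAt_u : ∀ t ∈ Ici 0, HasDerivAt u (-(w t * v t) * (w t * u t * v t)) t
  hasDerivAt_v : ∀ t ∈ Ici 0, HasDerivAt v (-(w t * u t) * (w t * u t * v t)) t

namespace IsGradientFlow

variable {w u v : ℝ → ℝ}

lemma abs_le_one (h : IsGradientFlow w u v) (hw : |w 0| ≤ 1) (hu : |u 0| ≤ 1) (hv : |v 0| ≤ 1) :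
    ∀ t ∈ Ici 0, |w t| ≤ 1 ∧ |u t| ≤ 1 ∧ |v t| ≤ 1 := by
  have hloss : ∀ t, -(w t * u t * v t) ^ 2 ≤ 0 := fun t ↦ neg_nonpos.2 (sq_nonneg _)
  refine fun t ht ↦ ⟨?_, ?_, ?_⟩
  · exact (antitoneOn_abs_of_mul_deriv_nonpos h.hasDerivAt_w fun s _ ↦
      (hloss s).trans_eq' (by ring)) self_mem_Ici ht ht |>.trans hw
  · exact (antitoneOn_abs_of_mul_deriv_nonpos h.hasDerivAt_u fun s _ ↦
      (hloss s).trans_eq' (by ring)) self_mem_Ici ht ht |>.trans hu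
  · exact (antitoneOn_abs_of_mul_deriv_nonpos h.hasDerivAt_v fun s _ ↦
      (hloss s).trans_eq' (by ring)) self_mem_Ici ht ht |>.trans hv

lemma sq_sub_sq_eq (h : IsGradientFlow w u v) :
    ∀ t ∈ Ici 0, w t ^ 2 - u t ^ 2 = w 0 ^ 2 - u 0 ^ 2 := fun t ht ↦
  have hderiv : ∀ s ∈ Ici 0, HasDerivAt (fun s ↦ w s ^ 2 - u s ^ 2) 0 s := fun s hs ↦
    (((h.hasDerivAt_w s hs).pow 2).sub ((h.hasDerivAt_u s hs).pow 2)).congr_deriv (by ring)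
  constant_of_has_deriv_right_zero (fun s hs ↦ (hderiv s hs.1).continuousAt.continuousWithinAt)
    (fun s hs ↦ (hderiv s hs.1).hasDerivWithinAt) t ⟨ht, le_rfl⟩

lemma u_eq_v (h : IsGradientFlow w u v)
    (hbox : ∀ t ∈ Ici 0, |w t| ≤ 1 ∧ |u t| ≤ 1 ∧ |v t| ≤ 1) (h0 : u 0 = v 0) :
    ∀ t ∈ Ici 0, u t = v t := fun t ht ↦ sub_eq_zero.1 <|
  eq_zero_of_abs_deriv_le_mul_abs (f := u - v) (K := 1) ht
    (fun s hs ↦ ((h.hasDerivAt_u s hs.1).sub (h.hasDerivAt_v s hs.1)).congr_deriv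
      (show _ = w s * u s * (w s * v s) * (u s - v s) by ring))
    (fun s hs ↦ by
      obtain ⟨hw, hu, hv⟩ := hbox s hs.1
      rw [abs_mul, one_mul]
      exact mul_le_of_le_one_left (abs_nonneg _) (abs_mul_le_one (abs_mul_le_one hw hu)
        (abs_mul_le_one hw hv)))
    (sub_eq_zero.2 h0)

lemma u_nonneg (h : IsGradientFlow w u v)
    (hbox : ∀ t ∈ Ici 0, |w t| ≤ 1 ∧ |u t| ≤ 1 ∧ |v t| ≤ 1) (h0 : 0 ≤ u 0) :
    ∀ t ∈ Ici 0, 0 ≤ u t :=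
  nonneg_of_hasDerivAt_mul_self (k := fun s ↦ -(w s * v s) * (w s * v s)) (K := 1)
    (fun s hs ↦ (h.hasDerivAt_u s hs).congr_deriv (by ring))
    (fun s hs ↦ by
      obtain ⟨hw, -, hv⟩ := hbox s hs
      have hwv := abs_mul_le_one hw hv
      exact abs_mul_le_one ((abs_neg _).trans_le hwv) hwv)
    h0

lemma w_nonneg (h : IsGradientFlow w u v)
    (hbox : ∀ t ∈ Ici 0, |w t| ≤ 1 ∧ |u t| ≤ 1 ∧ |v t| ≤ 1) (h0 : 0 ≤ w 0) :
    ∀ t ∈ Ici 0, 0 ≤ w t :=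
  nonneg_of_hasDerivAt_mul_self (k := fun s ↦ -(u s * v s) * (u s * v s)) (K := 1)
    (fun s hs ↦ (h.hasDerivAt_w s hs).congr_deriv (by ring))
    (fun s hs ↦ by
      obtain ⟨-, hu, hv⟩ := hbox s hs
      have huv := abs_mul_le_one hu hv
      exact abs_mul_le_one ((abs_neg _).trans_le huv) huv)
    h0

end IsGradientFlow

/-- For the gradient flow of `ℓ = ½(wuv)²` (target `σ = 0`),
if `0 < u(0) = v(0) ≤ w(0) ≤ 1`, then `0 ≤ u(t) = v(t) ≤ w(t) ≤ 1` for all `t ≥ 0`. -/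
theorem gradient_flow_ordering_preserved (w u v : ℝ → ℝ)
    (hw : ∀ t, 0 ≤ t → HasDerivAt w (-(u t * v t) * (w t * u t * v t)) t)
    (hu : ∀ t, 0 ≤ t → HasDerivAt u (-(w t * v t) * (w t * u t * v t)) t)
    (hv : ∀ t, 0 ≤ t → HasDerivAt v (-(w t * u t) * (w t * u t * v t)) t)
    (hu0 : 0 < u 0) (huv0 : u 0 = v 0) (huw0 : u 0 ≤ w 0) (hw0 : w 0 ≤ 1) :
    ∀ t, 0 ≤ t → 0 ≤ u t ∧ u t = v t ∧ u t ≤ w t ∧ w t ≤ 1 := by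
  have h : IsGradientFlow w u v := ⟨hw, hu, hv⟩
  have hu0' : |u 0| ≤ 1 := abs_le.2 ⟨by linarith, by linarith⟩
  have hbox := h.abs_le_one (abs_le.2 ⟨by linarith, hw0⟩) hu0' (huv0 ▸ hu0')
  have hu_nonneg := h.u_nonneg hbox hu0.le
  have hw_nonneg := h.w_nonneg hbox (hu0.le.trans huw0)
  intro t ht
  refine ⟨hu_nonneg t ht, h.u_eq_v hbox huv0 t ht, ?_, (abs_le.1 (hbox t ht).1).2⟩
  rw [← sq_le_sq₀ (hu_nonneg t ht) (hw_nonneg t ht), ← sub_nonneg, h.sq_sub_sq_eq t ht, sub_nonneg]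
  exact pow_le_pow_left₀ hu0.le huw0 2
end

section
/- Consider the scalar system a(t) = w(t)u(t)², where under the gradient flow with σ = 0 and 0 < u(0) = v(0) ≤ w(0) ≤ 1, a satisfies a'(t) = -a(t)³/w(t)² - 2w(t)a(t)², a(t) ∈ [0,1], and w(t) ≥ a(t)^{1/3}. Then a'(t) ≥ -3a(t)², and consequently a(t) ≥ a(0)/(1 + 3a(0)t) for all t ≥ 0. -/
/-!
Since `w ≥ a^{1/3}` and `w ≤ 1` give `a ≤ w³ ≤ w²`, the loss term `a³/w²` is at most `a²`, and
`2wa² ≤ 2a²`, so `a' ≥ -3a²`. The Riccati equation `b' = -3b²` with `b(0) = a(0)` is solved by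
`b(t) = a(0)/(1 + 3a(0)t)`, and a fencing argument against `b - ε(1 + t)` gives `a ≥ b`.
-/

open Set

noncomputable section

/-- The solution of `b' = -k b²` with `b 0 = c`. -/
def riccatiSolution (k c t : ℝ) : ℝ := c / (1 + k * c * t)

theorem hasDerivAt_riccatiSolution {k c x : ℝ} (hx : 1 + k * c * x ≠ 0) :
    HasDerivAt (riccatiSolution k c) (-k * riccatiSolution k c x ^ 2) x := by
  have hlin : HasDerivAt (fun t => 1 + k * c * t) (k * c) x := by
    simpa using ((hasDerivAt_id x).const_mul (k * c)).const_add 1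
  refine ((hasDerivAt_const x c).div hlin hx).congr_deriv ?_
  simp only [riccatiSolution]
  field_simp
  ring

section Comparison

variable {k : ℝ} {a a' : ℝ → ℝ}

theorem riccatiSolution_sub_le_of_neg_mul_sq_le_deriv (hk : 0 ≤ k)
    (hnonneg : ∀ t, 0 ≤ t → 0 ≤ a t) (hderiv : ∀ t, 0 ≤ t → HasDerivAt a (a' t) t)
    (hbound : ∀ t, 0 ≤ t → -k * a t ^ 2 ≤ a' t) {ε t : ℝ} (hε : 0 < ε) (ht : 0 ≤ t) :
    riccatiSolution k (a 0) t - ε * (1 + t) ≤ a t := by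
  set b := riccatiSolution k (a 0)
  have hb : ∀ x, 0 ≤ x → HasDerivAt (fun s => b s - ε * (1 + s)) (-k * b x ^ 2 - ε) x :=
    fun x hx => (hasDerivAt_riccatiSolution (by have := hnonneg 0 le_rfl; positivity)).sub
      (by simpa using ((hasDerivAt_id x).const_add 1).const_mul ε)
  refine image_le_of_deriv_right_lt_deriv_boundary' (B := a) (B' := a')
    (fun x hx => (hb x hx.1).continuousAt.continuousWithinAt)
    (fun x hx => (hb x hx.1).hasDerivWithinAt) ?_
    (fun x hx => (hderiv x hx.1).continuousAt.continuousWithinAt)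
    (fun x hx => (hderiv x hx.1).hasDerivWithinAt) ?_ (right_mem_Icc.2 ht)
  · simp [b, riccatiSolution, hε.le]
  · intro x hx htouch
    -- at a contact point `a x < b x`, so the barrier falls faster than `a` can
    have hlt : a x < b x := by nlinarith [hx.1]
    have hsq : a x ^ 2 ≤ b x ^ 2 := pow_le_pow_left₀ (hnonneg x hx.1) hlt.le 2
    nlinarith [hbound x hx.1]

theorem riccatiSolution_le_of_neg_mul_sq_le_deriv (hk : 0 ≤ k)
    (hnonneg : ∀ t, 0 ≤ t → 0 ≤ a t) (hderiv : ∀ t, 0 ≤ t → HasDerivAt a (a' t) t)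
    (hbound : ∀ t, 0 ≤ t → -k * a t ^ 2 ≤ a' t) {t : ℝ} (ht : 0 ≤ t) :
    riccatiSolution k (a 0) t ≤ a t := by
  refine le_of_forall_pos_le_add fun ε hε => ?_
  have hε' : 0 < ε / (1 + t) := by positivity
  have := riccatiSolution_sub_le_of_neg_mul_sq_le_deriv hk hnonneg hderiv hbound hε' ht
  rwa [div_mul_cancel₀ _ (by positivity), sub_le_iff_le_add] at this

end Comparison

theorem cube_div_sq_le_sq {x y : ℝ} (hxy : x ≤ y ^ 2) : x ^ 3 / y ^ 2 ≤ x ^ 2 := by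
  rcases (sq_nonneg y).eq_or_lt with hy | hy
  · simp [← hy, sq_nonneg]
  · rw [div_le_iff₀ hy]
    nlinarith [mul_le_mul_of_nonneg_left hxy (sq_nonneg x)]

theorem neg_three_mul_sq_le_of_rpow_le {x y : ℝ} (hx : 0 ≤ x) (hxy : x ^ ((1 : ℝ) / 3) ≤ y)
    (hy : y ≤ 1) : -3 * x ^ 2 ≤ -x ^ 3 / y ^ 2 - 2 * y * x ^ 2 := by
  have hy0 : 0 ≤ y := (Real.rpow_nonneg hx _).trans hxy
  have hcube : x ≤ y ^ 3 := by
    have hroot : (x ^ ((1 : ℝ) / 3)) ^ 3 = x := by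
      rw [← Real.rpow_natCast, ← Real.rpow_mul hx]
      norm_num
    exact hroot ▸ pow_le_pow_left₀ (Real.rpow_nonneg hx _) hxy 3
  have hsq : x ≤ y ^ 2 := hcube.trans (pow_le_pow_of_le_one hy0 hy (by norm_num))
  rw [neg_div]
  nlinarith [cube_div_sq_le_sq hsq, mul_le_mul_of_nonneg_right hy (sq_nonneg x)]

end

/-- If `a(t) ∈ [0,1]`, `w(t) ≥ a(t)^{1/3}`, `w(t) ≤ 1`, and
`a'(t) = -a(t)³/w(t)² - 2 w(t) a(t)²`, then `a'(t) ≥ -3 a(t)²` and consequently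
`a(t) ≥ a(0) / (1 + 3 a(0) t)` for all `t ≥ 0`. -/
theorem a_dynamics_lower_bound (a w : ℝ → ℝ)
    (ha01 : ∀ t, 0 ≤ t → a t ∈ Set.Icc (0 : ℝ) 1)
    (hwa : ∀ t, 0 ≤ t → (a t) ^ ((1 : ℝ) / 3) ≤ w t)
    (hw1 : ∀ t, 0 ≤ t → w t ≤ 1)
    (hderiv : ∀ t, 0 ≤ t →
      HasDerivAt a (-(a t) ^ 3 / (w t) ^ 2 - 2 * w t * (a t) ^ 2) t) :
    (∀ t, 0 ≤ t → -3 * (a t) ^ 2 ≤ -(a t) ^ 3 / (w t) ^ 2 - 2 * w t * (a t) ^ 2) ∧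
    (∀ t, 0 ≤ t → a 0 / (1 + 3 * a 0 * t) ≤ a t) := by
  have hbound : ∀ t, 0 ≤ t → -3 * (a t) ^ 2 ≤ -(a t) ^ 3 / (w t) ^ 2 - 2 * w t * (a t) ^ 2 :=
    fun t ht => neg_three_mul_sq_le_of_rpow_le (ha01 t ht).1 (hwa t ht) (hw1 t ht)
  exact ⟨hbound, fun t ht => riccatiSolution_le_of_neg_mul_sq_le_deriv (by norm_num)
    (fun s hs => (ha01 s hs).1) hderiv hbound ht⟩
end

section
/- Consider the loss L(t) = ½‖W₃(t)(W₂(t)W₁(t)+I) - A‖_F² under gradient flow. Then ‖W₃(t)‖_F ≤ ‖W₃(0)‖_F + √(t·L(0)) for all t ≥ 0. -/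
/-!
Along the flow the loss decreases at rate `‖∇_{W₁}L‖² + ‖∇_{W₂}L‖² + ‖∇_{W₃}L‖² ≥ ‖Ẇ₃‖²`.
Rather than integrating, compare `‖W₃(s) - W₃(0)‖` with `ε s + (L(0) - L(s)) / (4ε)`, whose
derivative dominates `‖Ẇ₃‖` by AM–GM, and optimize over `ε`: this is the Cauchy–Schwarz step
`∫₀ᵗ ‖Ẇ₃‖ ≤ √(t ∫₀ᵗ ‖Ẇ₃‖²) ≤ √(t L(0))` in differential form.
-/

open Matrix

/-- Frobenius norm of a matrix. -/
noncomputable def frob {m n : ℕ} (A : Matrix (Fin m) (Fin n) ℝ) : ℝ :=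
  Real.sqrt (∑ i, ∑ j, (A i j) ^ 2)

theorem le_sqrt_mul_of_forall_le_mul_add_div {x a b : ℝ} (ha : 0 < a)
    (h : ∀ ε > 0, x ≤ ε * a + b / (4 * ε)) : x ≤ √(a * b) := by
  rcases le_or_gt b 0 with hb | hb
  · refine le_trans (le_of_forall_pos_le_add fun δ hδ => ?_) (Real.sqrt_nonneg _)
    have hδa : 0 < δ / a := by positivity
    calc x ≤ δ / a * a + b / (4 * (δ / a)) := h _ hδa
      _ ≤ 0 + δ := by
        rw [div_mul_cancel₀ _ ha.ne', zero_add]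
        linarith [div_nonpos_of_nonpos_of_nonneg hb (by positivity : (0:ℝ) ≤ 4 * (δ / a))]
  · convert h (√b / (2 * √a)) (by positivity) using 1
    have hsa := Real.sq_sqrt ha.le
    have hsb := Real.sq_sqrt hb.le
    have : 0 < √a := Real.sqrt_pos.2 ha
    have : 0 < √b := Real.sqrt_pos.2 hb
    rw [Real.sqrt_mul ha.le]
    field_simp
    nlinarith

theorem norm_sub_le_sqrt_mul_of_sq_norm_deriv_le {E : Type*} [NormedAddCommGroup E]
    [NormedSpace ℝ E] {f f' : ℝ → E} {g g' : ℝ → ℝ} {a b : ℝ} (hab : a ≤ b)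
    (hf : ∀ s ∈ Set.Icc a b, HasDerivAt f (f' s) s) (hg : ∀ s ∈ Set.Icc a b, HasDerivAt g (g' s) s)
    (hfg : ∀ s ∈ Set.Icc a b, ‖f' s‖ ^ 2 ≤ -g' s) :
    ‖f b - f a‖ ≤ √((b - a) * (g a - g b)) := by
  rcases hab.eq_or_lt with rfl | hab
  · simp
  refine le_sqrt_mul_of_forall_le_mul_add_div (sub_pos.2 hab) fun ε hε => ?_
  have hB : ∀ s ∈ Set.Icc a b, HasDerivAt (fun s => ε * (s - a) + (g a - g s) / (4 * ε))
      (ε - g' s / (4 * ε)) s := fun s hs =>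
    ((((hasDerivAt_id' s).sub_const a).const_mul ε).fun_add
      (((hg s hs).const_sub (g a)).div_const (4 * ε))).congr_deriv (by ring)
  have hbound : ∀ s ∈ Set.Icc a b, ‖f' s‖ ≤ ε - g' s / (4 * ε) := fun s hs => by
    rw [← sub_nonneg]
    have : ε - g' s / (4 * ε) - ‖f' s‖
        = ((‖f' s‖ - 2 * ε) ^ 2 + (-g' s - ‖f' s‖ ^ 2)) / (4 * ε) := by
      field_simp
      ring
    rw [this]
    exact div_nonneg (add_nonneg (sq_nonneg _) (by linarith [hfg s hs])) (by positivity)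
  simpa using image_norm_le_of_norm_deriv_right_le_deriv_boundary'
    (fun s hs => ((hf s hs).continuousAt.sub continuousAt_const).continuousWithinAt)
    (fun s hs => ((hf s (Set.Ico_subset_Icc_self hs)).sub_const (f a)).hasDerivWithinAt)
    (by simp) (fun s hs => (hB s hs).continuousAt.continuousWithinAt)
    (fun s hs => (hB s (Set.Ico_subset_Icc_self hs)).hasDerivWithinAt)
    (fun s hs => hbound s (Set.Ico_subset_Icc_self hs)) (Set.right_mem_Icc.2 hab.le)

theorem frob_sq {m n : ℕ} (M : Matrix (Fin m) (Fin n) ℝ) : frob M ^ 2 = ∑ i, ∑ j, M i j ^ 2 :=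
  Real.sq_sqrt (by positivity)

theorem frob_sq_eq_trace {m n : ℕ} (M : Matrix (Fin m) (Fin n) ℝ) :
    frob M ^ 2 = (Mᵀ * M).trace := by
  rw [frob_sq, Matrix.trace, Finset.sum_comm]
  simp only [diag, mul_apply, transpose_apply, sq]

theorem frob_neg {m n : ℕ} (M : Matrix (Fin m) (Fin n) ℝ) : frob (-M) = frob M := by
  simp only [frob, Matrix.neg_apply, neg_sq]

def frobVec {m n : ℕ} (M : Matrix (Fin m) (Fin n) ℝ) : EuclideanSpace ℝ (Fin m × Fin n) :=
  WithLp.toLp 2 fun p => M p.1 p.2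

theorem norm_frobVec {m n : ℕ} (M : Matrix (Fin m) (Fin n) ℝ) : ‖frobVec M‖ = frob M := by
  simp [EuclideanSpace.norm_eq, frob, Fintype.sum_prod_type, frobVec]

def HasEntrywiseDerivAt {m n : Type*} (M : ℝ → Matrix m n ℝ) (M' : Matrix m n ℝ) (t : ℝ) : Prop :=
  ∀ i j, HasDerivAt (fun s => M s i j) (M' i j) t

namespace HasEntrywiseDerivAt

variable {l m n : Type*} {M : ℝ → Matrix l m ℝ} {M' : Matrix l m ℝ} {t : ℝ}

theorem mul [Fintype m] {N : ℝ → Matrix m n ℝ} {N' : Matrix m n ℝ}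
    (hM : HasEntrywiseDerivAt M M' t) (hN : HasEntrywiseDerivAt N N' t) :
    HasEntrywiseDerivAt (fun s => M s * N s) (M' * N t + M t * N') t := fun i k => by
  simp only [mul_apply, Matrix.add_apply, ← Finset.sum_add_distrib]
  exact HasDerivAt.fun_sum fun j _ => (hM i j).fun_mul (hN j k)

theorem add_const (hM : HasEntrywiseDerivAt M M' t) (C : Matrix l m ℝ) :
    HasEntrywiseDerivAt (fun s => M s + C) M' t :=
  fun i j => (hM i j).add_const (C i j)

theorem sub_const (hM : HasEntrywiseDerivAt M M' t) (C : Matrix l m ℝ) :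
    HasEntrywiseDerivAt (fun s => M s - C) M' t :=
  fun i j => (hM i j).sub_const (C i j)

theorem hasDerivAt_frob_sq {m n : ℕ} {M : ℝ → Matrix (Fin m) (Fin n) ℝ}
    {M' : Matrix (Fin m) (Fin n) ℝ}
    (hM : HasEntrywiseDerivAt M M' t) :
    HasDerivAt (fun s => frob (M s) ^ 2) (2 * ((M t)ᵀ * M').trace) t := by
  simp only [frob_sq, Matrix.trace, diag, mul_apply, transpose_apply, Finset.mul_sum]
  rw [Finset.sum_comm]
  exact HasDerivAt.fun_sum fun i _ => HasDerivAt.fun_sum fun j _ =>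
    ((hM i j).fun_pow 2).congr_deriv (by ring)

theorem hasDerivAt_frobVec {m n : ℕ} {M : ℝ → Matrix (Fin m) (Fin n) ℝ}
    {M' : Matrix (Fin m) (Fin n) ℝ} (hM : HasEntrywiseDerivAt M M' t) :
    HasDerivAt (fun s => frobVec (M s)) (frobVec M') t :=
  (PiLp.continuousLinearEquiv 2 ℝ fun _ : Fin m × Fin n => ℝ).symm.hasFDerivAt.comp_hasDerivAt t
    (hasDerivAt_pi.2 fun p : Fin m × Fin n => hM p.1 p.2)

end HasEntrywiseDerivAt

theorem trace_transpose_mul_residual_variation {n R : Type*} [Fintype n] [CommRing R]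
    (E B W₁ W₂ W₃ D₁ D₂ D₃ : Matrix n n R) :
    (Eᵀ * (D₃ * B + W₃ * (D₂ * W₁ + W₂ * D₁))).trace
      = ((W₂ᵀ * W₃ᵀ * E)ᵀ * D₁).trace + ((W₃ᵀ * E * W₁ᵀ)ᵀ * D₂).trace
        + ((E * Bᵀ)ᵀ * D₃).trace := by
  simp only [transpose_mul, transpose_transpose, Matrix.mul_add, trace_add, Matrix.mul_assoc]
  rw [trace_mul_comm B, trace_mul_comm W₁]
  simp only [Matrix.mul_assoc]
  ring

theorem hasDerivAt_half_frob_sq_residual {d : ℕ} {A : Matrix (Fin d) (Fin d) ℝ}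
    {W₁ W₂ W₃ : ℝ → Matrix (Fin d) (Fin d) ℝ} {t : ℝ}
    (h₁ : HasEntrywiseDerivAt W₁ (-((W₂ t)ᵀ * (W₃ t)ᵀ * (W₃ t * (W₂ t * W₁ t + 1) - A))) t)
    (h₂ : HasEntrywiseDerivAt W₂ (-((W₃ t)ᵀ * (W₃ t * (W₂ t * W₁ t + 1) - A) * (W₁ t)ᵀ)) t)
    (h₃ : HasEntrywiseDerivAt W₃ (-((W₃ t * (W₂ t * W₁ t + 1) - A) * (W₂ t * W₁ t + 1)ᵀ)) t) :
    HasDerivAt (fun s => 1 / 2 * frob (W₃ s * (W₂ s * W₁ s + 1) - A) ^ 2)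
      (-(frob ((W₂ t)ᵀ * (W₃ t)ᵀ * (W₃ t * (W₂ t * W₁ t + 1) - A)) ^ 2
        + frob ((W₃ t)ᵀ * (W₃ t * (W₂ t * W₁ t + 1) - A) * (W₁ t)ᵀ) ^ 2
        + frob ((W₃ t * (W₂ t * W₁ t + 1) - A) * (W₂ t * W₁ t + 1)ᵀ) ^ 2)) t := by
  have hE := (h₃.mul ((h₂.mul h₁).add_const 1)).sub_const A
  refine (hE.hasDerivAt_frob_sq.const_mul (1 / 2)).congr_deriv ?_
  rw [trace_transpose_mul_residual_variation]
  simp only [Matrix.mul_neg, trace_neg, ← frob_sq_eq_trace]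
  ring

/-- For `L(t) = ½‖W₃(t)(W₂(t)W₁(t)+I) - A‖_F²` under gradient flow,
`‖W₃(t)‖_F ≤ ‖W₃(0)‖_F + √(t · L(0))` for all `t ≥ 0`. -/
theorem W3_norm_growth_bound {d : ℕ} (A : Matrix (Fin d) (Fin d) ℝ)
    (W₁ W₂ W₃ : ℝ → Matrix (Fin d) (Fin d) ℝ)
    (hf1 : ∀ t, 0 ≤ t → ∀ i j, HasDerivAt (fun s => W₁ s i j)
      (-(((W₂ t)ᵀ * (W₃ t)ᵀ * (W₃ t * (W₂ t * W₁ t + 1) - A)) i j)) t)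
    (hf2 : ∀ t, 0 ≤ t → ∀ i j, HasDerivAt (fun s => W₂ s i j)
      (-(((W₃ t)ᵀ * (W₃ t * (W₂ t * W₁ t + 1) - A) * (W₁ t)ᵀ) i j)) t)
    (hf3 : ∀ t, 0 ≤ t → ∀ i j, HasDerivAt (fun s => W₃ s i j)
      (-(((W₃ t * (W₂ t * W₁ t + 1) - A)
          * ((W₂ t * W₁ t + 1 : Matrix (Fin d) (Fin d) ℝ)ᵀ)) i j)) t) :
    ∀ t, 0 ≤ t → frob (W₃ t) ≤ frob (W₃ 0)
      + Real.sqrt (t * ((1 / 2) * frob (W₃ 0 * (W₂ 0 * W₁ 0 + 1) - A) ^ 2)) := by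
  intro t ht
  have h₃ (s : ℝ) (hs : 0 ≤ s) : HasEntrywiseDerivAt W₃
      (-((W₃ s * (W₂ s * W₁ s + 1) - A) * (W₂ s * W₁ s + 1)ᵀ)) s := hf3 s hs
  have hdisp := norm_sub_le_sqrt_mul_of_sq_norm_deriv_le ht
    (fun s hs => (h₃ s hs.1).hasDerivAt_frobVec)
    (fun s hs => hasDerivAt_half_frob_sq_residual (hf1 s hs.1) (hf2 s hs.1) (h₃ s hs.1))
    (fun s _ => by
      rw [norm_frobVec, frob_neg, neg_neg]
      exact le_add_of_nonneg_left (by positivity))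
  rw [← norm_frobVec, ← norm_frobVec]
  calc ‖frobVec (W₃ t)‖ ≤ ‖frobVec (W₃ 0)‖ + ‖frobVec (W₃ t) - frobVec (W₃ 0)‖ :=
        norm_le_norm_add_norm_sub' _ _
    _ ≤ _ := by
      gcongr
      refine hdisp.trans (Real.sqrt_le_sqrt ?_)
      rw [sub_zero]
      gcongr
      simp only [sub_le_self_iff]
      positivity
end
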